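/- If two AMA menus M1 and M2, both indexed by {0,1,...,K}, are 0-reducible, then they are 0-mode-connected; moreover, the continuous path connecting them can be taken piecewise linear with only three linear pieces. -/

import Mathlib

/-!
With `ε = 0`, reducibility says that almost surely only the options in a set `K'` containing `0`,
with `|K'| ≤ √(K+1)`, matter for the payment. So if `ψ` fixes `K'` pointwise, then `M ∘ ψ` has
almost surely the same payment as `M`. Moreover, along the segment from `M` to `M ∘ ψ` every
maximum and the minimal boost entering the payment are attained at one common option, so the
payment is affine on the segment. Since `|K₁| |K₂| ≤ K + 1`, the indices outside `K₁ ∪ K₂` leave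
room to choose `ψ₁`, `ψ₂` so that every pair in `K₁ × K₂` occurs at a common index of `M₁ ∘ ψ₁`
and `M₂ ∘ ψ₂`. Then the payment is affine on the middle segment as well. Along
`M₁, M₁ ∘ ψ₁, M₂ ∘ ψ₂, M₂` the revenue is therefore piecewise a convex combination of `Rev M₁`
and `Rev M₂`.
-/

open MeasureTheory Finset

namespace AMA

/-- An AMA menu: for each of the `K+1` option indices, an allocation
`x : Fin m → Fin n → ℝ` (buyer `i` receives `x i j` of item `j`) and a boost `β : ℝ`. -/
abbrev Menu (m n K : ℕ) := Fin (K + 1) → (Fin m → Fin n → ℝ) × ℝ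

/-- Inner product of a valuation and an allocation. -/
def dotp {n : ℕ} (v x : Fin n → ℝ) : ℝ := ∑ j, v j * x j

/-- A valid AMA menu: entries in `[0,1]`, each item allocated at most once in total,
default option `(0, 0)`. -/
def IsMenu {m n K : ℕ} (M : Menu m n K) : Prop :=
  (∀ k i j, 0 ≤ (M k).1 i j ∧ (M k).1 i j ≤ 1) ∧
  (∀ k j, ∑ i, (M k).1 i j ≤ 1) ∧ M 0 = 0

/-- The set of valuation profiles: each buyer's valuation lies in `[0,1]^n` with
coordinate sum at most `1`. -/
def VP (m n : ℕ) : Set (Fin m → Fin n → ℝ) :=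
  {v | ∀ i, (∀ j, 0 ≤ v i j ∧ v i j ≤ 1) ∧ ∑ j, v i j ≤ 1}

/-- Boosted welfare of option `k` at the valuation profile `v`. -/
def bw {m n K : ℕ} (M : Menu m n K) (v : Fin m → Fin n → ℝ) (k : Fin (K + 1)) : ℝ :=
  (∑ i, dotp (v i) ((M k).1 i)) + (M k).2

/-- Boosted welfare of option `k` at `v` when buyer `i` is omitted. -/
def bwWo {m n K : ℕ} (M : Menu m n K) (v : Fin m → Fin n → ℝ) (i : Fin m)
    (k : Fin (K + 1)) : ℝ :=
  (∑ l ∈ Finset.univ.erase i, dotp (v l) ((M k).1 l)) + (M k).2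

/-- Maximal boosted welfare `W(v)`. -/
noncomputable def W {m n K : ℕ} (M : Menu m n K) (v : Fin m → Fin n → ℝ) : ℝ :=
  Finset.univ.sup' Finset.univ_nonempty (bw M v)

/-- Maximal boosted welfare `W(v₋ᵢ)` with buyer `i` omitted. -/
noncomputable def WWo {m n K : ℕ} (M : Menu m n K) (v : Fin m → Fin n → ℝ)
    (i : Fin m) : ℝ :=
  Finset.univ.sup' Finset.univ_nonempty (bwWo M v i)

/-- The minimal boost among boosted-welfare-maximizing options (tie-breaking in favor
of maximal total payment). -/
noncomputable def minBeta {m n K : ℕ} (M : Menu m n K) (v : Fin m → Fin n → ℝ) : ℝ :=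
  sInf {b : ℝ | ∃ k, bw M v k = W M v ∧ b = (M k).2}

/-- Total payment collected at `v`:
`∑ i W(v₋ᵢ) − (m−1) W(v) − min {β k : W_k(v) = W(v)}`. -/
noncomputable def pay {m n K : ℕ} (M : Menu m n K) (v : Fin m → Fin n → ℝ) : ℝ :=
  (∑ i, WWo M v i) - ((m : ℝ) - 1) * W M v - minBeta M v

/-- Expected revenue of the AMA menu `M` under the profile distribution `F`. -/
noncomputable def Rev {m n K : ℕ} (F : Measure (Fin m → Fin n → ℝ))
    (M : Menu m n K) : ℝ :=
  ∫ v, pay M v ∂F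

/-- Option-wise convex combination of two AMA menus. -/
noncomputable def comb {m n K : ℕ} (lam : ℝ) (M M' : Menu m n K) : Menu m n K :=
  fun k => (fun i j => lam * (M k).1 i j + (1 - lam) * (M' k).1 i j,
            lam * (M k).2 + (1 - lam) * (M' k).2)

/-- The event that the option subset `K'` suffices at `v`: some boosted-welfare
maximizer with minimal boost lies in `K'`, and for every buyer `i` some maximizer of the
boosted welfare of `v₋ᵢ` lies in `K'`. -/
def GoodEvent {m n K : ℕ} (M : Menu m n K) (K' : Finset (Fin (K + 1)))
    (v : Fin m → Fin n → ℝ) : Prop :=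
  (∃ k ∈ K', bw M v k = W M v ∧ (M k).2 = minBeta M v) ∧
  ∀ i : Fin m, ∃ k ∈ K', bwWo M v i k = WWo M v i

/-- `M` is `ε`-reducible: some subset `K'` of options containing the default option, of
cardinality at most `√(K+1)`, whose good event has probability at least `1 - ε/m`. -/
def Reducible {m n K : ℕ} (F : Measure (Fin m → Fin n → ℝ)) (M : Menu m n K)
    (ε : ℝ) : Prop :=
  ∃ K' : Finset (Fin (K + 1)), 0 ∈ K' ∧ (K'.card : ℝ) ≤ Real.sqrt (K + 1) ∧
    (F {v | GoodEvent M K' v}).toReal ≥ 1 - ε / (m : ℝ)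

/-- `M₁` and `M₂` are `ε`-mode-connected by a piecewise linear path with `pieces`
linear pieces, all whose menus are valid AMA menus and have revenue at least
`min (Rev M₁) (Rev M₂) - ε`. -/
def PLConnected {m n K : ℕ} (F : Measure (Fin m → Fin n → ℝ)) (M₁ M₂ : Menu m n K)
    (ε : ℝ) (pieces : ℕ) : Prop :=
  ∃ P : Fin (pieces + 1) → Menu m n K, P 0 = M₁ ∧ P (Fin.last pieces) = M₂ ∧
    (∀ i, IsMenu (P i)) ∧
    ∀ i : Fin pieces, ∀ lam ∈ Set.Icc (0 : ℝ) 1,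
      Rev F (comb lam (P i.castSucc) (P i.succ)) ≥ min (Rev F M₁) (Rev F M₂) - ε

section Optimum

variable {m n K : ℕ} (M : Menu m n K) (v : Fin m → Fin n → ℝ)

lemma bw_le_W (k : Fin (K + 1)) : bw M v k ≤ W M v :=
  le_sup' (bw M v) (mem_univ k)

lemma bwWo_le_WWo (i : Fin m) (k : Fin (K + 1)) : bwWo M v i k ≤ WWo M v i :=
  le_sup' (bwWo M v i) (mem_univ k)

variable {M v}

lemma W_eq_of {k : Fin (K + 1)} {w : ℝ} (hk : bw M v k = w) (hle : ∀ k', bw M v k' ≤ w) :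
    W M v = w :=
  le_antisymm (sup'_le _ _ fun k' _ => hle k') (hk ▸ bw_le_W M v k)

lemma WWo_eq_of {i : Fin m} {k : Fin (K + 1)} {w : ℝ} (hk : bwWo M v i k = w)
    (hle : ∀ k', bwWo M v i k' ≤ w) : WWo M v i = w :=
  le_antisymm (sup'_le _ _ fun k' _ => hle k') (hk ▸ bwWo_le_WWo M v i k)

lemma optimalBoosts_finite :
    {b : ℝ | ∃ k, bw M v k = W M v ∧ b = (M k).2}.Finite :=
  (Set.finite_range fun k => (M k).2).subset fun _ ⟨k, _, hb⟩ => ⟨k, hb.symm⟩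

lemma minBeta_le {k : Fin (K + 1)} (hk : bw M v k = W M v) : minBeta M v ≤ (M k).2 :=
  csInf_le optimalBoosts_finite.bddBelow ⟨k, hk, rfl⟩

lemma exists_minBeta_eq : ∃ k, bw M v k = W M v ∧ minBeta M v = (M k).2 := by
  obtain ⟨k, -, hk⟩ := exists_mem_eq_sup' univ_nonempty (bw M v)
  refine Set.Nonempty.csInf_mem ?_ optimalBoosts_finite
  exact ⟨(M k).2, k, hk.symm, rfl⟩

lemma minBeta_eq_of {k : Fin (K + 1)} {b : ℝ} (hk : bw M v k = W M v) (hb : (M k).2 = b)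
    (hle : ∀ k', bw M v k' = W M v → b ≤ (M k').2) : minBeta M v = b := by
  obtain ⟨k', hk', hb'⟩ := exists_minBeta_eq (M := M) (v := v)
  exact le_antisymm (hb ▸ minBeta_le hk) (hb' ▸ hle k' hk')

lemma minBeta_le_iff {r : ℝ} : minBeta M v ≤ r ↔ ∃ k, bw M v k = W M v ∧ (M k).2 ≤ r := by
  refine ⟨fun h => ?_, fun ⟨k, hk, hr⟩ => (minBeta_le hk).trans hr⟩
  obtain ⟨k, hk, hb⟩ := exists_minBeta_eq (M := M) (v := v)
  exact ⟨k, hk, hb ▸ h⟩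

end Optimum

section Measurability

variable {m n K : ℕ} (M : Menu m n K)

lemma measurable_bw (k : Fin (K + 1)) : Measurable fun v => bw M v k := by
  unfold bw dotp
  fun_prop

lemma measurable_bwWo (i : Fin m) (k : Fin (K + 1)) : Measurable fun v => bwWo M v i k := by
  unfold bwWo dotp
  fun_prop

lemma measurable_W : Measurable (W M) := by
  convert measurable_sup' univ_nonempty fun k _ => measurable_bw M k using 1
  ext v
  simp only [W, Finset.sup'_apply]

lemma measurable_WWo (i : Fin m) : Measurable fun v => WWo M v i := by
  convert measurable_sup' univ_nonempty fun k _ => measurable_bwWo M i k using 1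
  ext v
  simp only [WWo, Finset.sup'_apply]

lemma measurable_minBeta : Measurable (minBeta M) := by
  refine measurable_of_Iic fun r => ?_
  have h : minBeta M ⁻¹' Set.Iic r = ⋃ k, {v | bw M v k = W M v} ∩ {_v | (M k).2 ≤ r} := by
    ext v
    simp only [Set.mem_preimage, Set.mem_Iic, minBeta_le_iff, Set.mem_iUnion,
      Set.mem_inter_iff, Set.mem_ofPred_eq]
  rw [h]
  exact .iUnion fun k => (measurableSet_eq_fun (measurable_bw M k) (measurable_W M)).inter
    (.const _)

lemma measurableSet_goodEvent (K' : Finset (Fin (K + 1))) :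
    MeasurableSet {v | GoodEvent M K' v} := by
  have h : {v | GoodEvent M K' v} =
      (⋃ k ∈ K', {v | bw M v k = W M v} ∩ {v | (M k).2 = minBeta M v}) ∩
        ⋂ i, ⋃ k ∈ K', {v | bwWo M v i k = WWo M v i} := by
    ext v
    simp only [GoodEvent, Set.mem_ofPred_eq, Set.mem_inter_iff, Set.mem_iUnion,
      Set.mem_iInter, exists_prop]
  rw [h]
  refine .inter (.biUnion K'.countable_toSet fun k _ => .inter ?_ ?_)
    (.iInter fun i => .biUnion K'.countable_toSet fun k _ => ?_)
  · exact measurableSet_eq_fun (measurable_bw M k) (measurable_W M)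
  · exact measurableSet_eq_fun measurable_const (measurable_minBeta M)
  · exact measurableSet_eq_fun (measurable_bwWo M i k) (measurable_WWo M i)

lemma measurableSet_VP {m n : ℕ} : MeasurableSet (VP m n) := by
  unfold VP
  measurability

end Measurability

section Integrability

variable {m n K : ℕ} {M : Menu m n K} {v : Fin m → Fin n → ℝ}

lemma abs_sup'_le {ι : Type*} {s : Finset ι} (hs : s.Nonempty) {f : ι → ℝ} {C : ℝ}
    (h : ∀ i ∈ s, |f i| ≤ C) : |s.sup' hs f| ≤ C := by
  obtain ⟨i, hi, he⟩ := exists_mem_eq_sup' hs f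
  exact he ▸ h i hi

lemma dotp_mem_Icc (hM : IsMenu M) (hv : v ∈ VP m n) (i : Fin m) (k : Fin (K + 1)) :
    dotp (v i) ((M k).1 i) ∈ Set.Icc 0 1 := by
  refine ⟨sum_nonneg fun j _ => mul_nonneg ((hv i).1 j).1 (hM.1 k i j).1, ?_⟩
  calc dotp (v i) ((M k).1 i) ≤ ∑ j, v i j :=
        sum_le_sum fun j _ => mul_le_of_le_one_right ((hv i).1 j).1 (hM.1 k i j).2
    _ ≤ 1 := (hv i).2

lemma abs_sum_dotp_add_boost_le (hM : IsMenu M) (hv : v ∈ VP m n) (s : Finset (Fin m))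
    (k : Fin (K + 1)) {C : ℝ} (hC : |(M k).2| ≤ C) :
    |∑ l ∈ s, dotp (v l) ((M k).1 l) + (M k).2| ≤ m + C := by
  have h0 : 0 ≤ ∑ l ∈ s, dotp (v l) ((M k).1 l) :=
    sum_nonneg fun l _ => (dotp_mem_Icc hM hv l k).1
  have h1 : ∑ l ∈ s, dotp (v l) ((M k).1 l) ≤ m :=
    calc ∑ l ∈ s, dotp (v l) ((M k).1 l) ≤ s.card := by
          simpa using sum_le_sum fun l (_ : l ∈ s) => (dotp_mem_Icc hM hv l k).2
      _ ≤ m := by exact_mod_cast (card_le_univ s).trans_eq (Fintype.card_fin m)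
  rw [abs_le] at hC ⊢
  constructor <;> linarith

lemma integrable_pay {F : Measure (Fin m → Fin n → ℝ)} [IsFiniteMeasure F]
    (hF : ∀ᵐ v ∂F, v ∈ VP m n) (hM : IsMenu M) : Integrable (pay M) F := by
  obtain ⟨C, hC⟩ := Finite.exists_le fun k => |(M k).2|
  have hW : Integrable (W M) F :=
    .of_bound (measurable_W M).aestronglyMeasurable (m + C) <| hF.mono fun v hv =>
      abs_sup'_le _ fun k _ => abs_sum_dotp_add_boost_le hM hv univ k (hC k)
  have hWWo (i : Fin m) : Integrable (fun v => WWo M v i) F :=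
    .of_bound (measurable_WWo M i).aestronglyMeasurable (m + C) <| hF.mono fun v hv =>
      abs_sup'_le _ fun k _ => abs_sum_dotp_add_boost_le hM hv _ k (hC k)
  have hβ : Integrable (minBeta M) F :=
    .of_bound (measurable_minBeta M).aestronglyMeasurable C <| ae_of_all _ fun v => by
      obtain ⟨k, -, hk⟩ := exists_minBeta_eq (M := M) (v := v)
      exact hk ▸ hC k
  exact ((integrable_finsetSum _ fun i _ => hWWo i).sub (hW.const_mul _)).sub hβ

end Integrability

lemma ae_mem_of_measure_eq_one {α : Type*} [MeasurableSpace α] {μ : Measure α}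
    [IsProbabilityMeasure μ] {s : Set α} (hs : MeasurableSet s) (h : μ s = 1) :
    ∀ᵐ x ∂μ, x ∈ s :=
  (ae_mem_iff_measure_eq hs.nullMeasurableSet).2 (by rw [h, measure_univ])

lemma Reducible.exists_ae_goodEvent {m n K : ℕ} {F : Measure (Fin m → Fin n → ℝ)}
    [IsProbabilityMeasure F] {M : Menu m n K} (h : Reducible F M 0) :
    ∃ K' : Finset (Fin (K + 1)), 0 ∈ K' ∧ (K'.card : ℝ) ≤ Real.sqrt (K + 1) ∧
      ∀ᵐ v ∂F, GoodEvent M K' v := by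
  obtain ⟨K', h0, hcard, hprob⟩ := h
  refine ⟨K', h0, hcard, ae_mem_of_measure_eq_one (measurableSet_goodEvent M K') ?_⟩
  rw [zero_div, sub_zero] at hprob
  exact (ENNReal.toReal_eq_one_iff _).1 <| le_antisymm
    (ENNReal.toReal_le_of_le_ofReal zero_le_one (by simpa using prob_le_one)) hprob

section Combination

variable {m n K : ℕ}

lemma dotp_comb (lam : ℝ) (v x x' : Fin n → ℝ) :
    dotp v (fun j => lam * x j + (1 - lam) * x' j) = lam * dotp v x + (1 - lam) * dotp v x' := by
  simp only [dotp, mul_sum, ← sum_add_distrib]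
  exact sum_congr rfl fun j _ => by ring

lemma bw_comb (lam : ℝ) (A B : Menu m n K) (v : Fin m → Fin n → ℝ) (k : Fin (K + 1)) :
    bw (comb lam A B) v k = lam * bw A v k + (1 - lam) * bw B v k := by
  simp only [bw, comb, dotp_comb, sum_add_distrib, ← mul_sum]
  ring

lemma bwWo_comb (lam : ℝ) (A B : Menu m n K) (v : Fin m → Fin n → ℝ) (i : Fin m)
    (k : Fin (K + 1)) :
    bwWo (comb lam A B) v i k = lam * bwWo A v i k + (1 - lam) * bwWo B v i k := by
  simp only [bwWo, comb, dotp_comb, sum_add_distrib, ← mul_sum]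
  ring

def SharesOptimum (A B : Menu m n K) (v : Fin m → Fin n → ℝ) : Prop :=
  (∃ k, bw A v k = W A v ∧ (A k).2 = minBeta A v ∧ bw B v k = W B v ∧ (B k).2 = minBeta B v) ∧
  ∀ i, ∃ k, bwWo A v i k = WWo A v i ∧ bwWo B v i k = WWo B v i

lemma SharesOptimum.symm {A B : Menu m n K} {v : Fin m → Fin n → ℝ}
    (h : SharesOptimum A B v) : SharesOptimum B A v := by
  obtain ⟨⟨k, hA, hβA, hB, hβB⟩, hWo⟩ := h
  exact ⟨⟨k, hB, hβB, hA, hβA⟩, fun i => (hWo i).imp fun _ h => h.symm⟩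

lemma mul_minBeta_le_of_mul_eq {A : Menu m n K} {v : Fin m → Fin n → ℝ} {lam : ℝ}
    (hlam : 0 ≤ lam) {k : Fin (K + 1)} (h : lam * (W A v - bw A v k) = 0) :
    lam * minBeta A v ≤ lam * (A k).2 := by
  rcases mul_eq_zero.1 h with h | h
  · simp [h]
  · exact mul_le_mul_of_nonneg_left (minBeta_le (by linarith)) hlam

lemma pay_comb_of_sharesOptimum {A B : Menu m n K} {v : Fin m → Fin n → ℝ}
    (h : SharesOptimum A B v) {lam : ℝ} (h0 : 0 ≤ lam) (h1 : lam ≤ 1) :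
    pay (comb lam A B) v = lam * pay A v + (1 - lam) * pay B v := by
  obtain ⟨⟨k₀, hA, hβA, hB, hβB⟩, hWo⟩ := h
  have h1' : 0 ≤ 1 - lam := sub_nonneg.2 h1
  have hW : W (comb lam A B) v = lam * W A v + (1 - lam) * W B v :=
    W_eq_of (k := k₀) (by rw [bw_comb, hA, hB]) fun k => by
      rw [bw_comb]
      gcongr <;> apply bw_le_W
  have hWWo (i : Fin m) : WWo (comb lam A B) v i = lam * WWo A v i + (1 - lam) * WWo B v i := by
    obtain ⟨k, hkA, hkB⟩ := hWo i
    refine WWo_eq_of (k := k) (by rw [bwWo_comb, hkA, hkB]) fun k' => ?_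
    rw [bwWo_comb]
    gcongr <;> apply bwWo_le_WWo
  have hβ : minBeta (comb lam A B) v = lam * minBeta A v + (1 - lam) * minBeta B v := by
    refine minBeta_eq_of (k := k₀) (by rw [bw_comb, hW, hA, hB])
      (by simp only [comb, hβA, hβB]) fun k hk => ?_
    rw [bw_comb, hW] at hk
    have hkA : 0 ≤ lam * (W A v - bw A v k) := mul_nonneg h0 (sub_nonneg.2 (bw_le_W A v k))
    have hkB : 0 ≤ (1 - lam) * (W B v - bw B v k) :=
      mul_nonneg h1' (sub_nonneg.2 (bw_le_W B v k))
    obtain ⟨hzA, hzB⟩ := (add_eq_zero_iff_of_nonneg hkA hkB).1 (by linarith)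
    exact add_le_add (mul_minBeta_le_of_mul_eq h0 hzA) (mul_minBeta_le_of_mul_eq h1' hzB)
  simp only [pay, hW, hWWo, hβ, sum_add_distrib, ← mul_sum]
  ring

lemma rev_comb_of_ae_sharesOptimum {F : Measure (Fin m → Fin n → ℝ)} {A B : Menu m n K}
    (hA : Integrable (pay A) F) (hB : Integrable (pay B) F)
    (h : ∀ᵐ v ∂F, SharesOptimum A B v) {lam : ℝ} (h0 : 0 ≤ lam) (h1 : lam ≤ 1) :
    Rev F (comb lam A B) = lam * Rev F A + (1 - lam) * Rev F B := by
  unfold Rev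
  rw [integral_congr_ae (h.mono fun v hv => pay_comb_of_sharesOptimum hv h0 h1),
    integral_add (hA.const_mul lam) (hB.const_mul (1 - lam)), integral_const_mul,
    integral_const_mul]

end Combination

section Reindexing

variable {m n K : ℕ} {M : Menu m n K} {v : Fin m → Fin n → ℝ} {ψ : Fin (K + 1) → Fin (K + 1)}

lemma IsMenu.comp (hM : IsMenu M) (hψ : ψ 0 = 0) : IsMenu (M ∘ ψ) :=
  ⟨fun k => hM.1 (ψ k), fun k => hM.2.1 (ψ k), by simp [hψ, hM.2.2]⟩

lemma W_comp {k : Fin (K + 1)} (hk : bw M v (ψ k) = W M v) : W (M ∘ ψ) v = W M v :=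
  W_eq_of (k := k) hk fun k' => bw_le_W M v (ψ k')

lemma WWo_comp {i : Fin m} {k : Fin (K + 1)} (hk : bwWo M v i (ψ k) = WWo M v i) :
    WWo (M ∘ ψ) v i = WWo M v i :=
  WWo_eq_of (k := k) hk fun k' => bwWo_le_WWo M v i (ψ k')

lemma minBeta_comp {k : Fin (K + 1)} (hk : bw M v (ψ k) = W M v)
    (hβ : (M (ψ k)).2 = minBeta M v) : minBeta (M ∘ ψ) v = minBeta M v :=
  minBeta_eq_of (k := k) (by rwa [W_comp hk]) hβ fun k' hk' =>
    minBeta_le (k := ψ k') (by rwa [W_comp hk] at hk')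

lemma pay_comp {K' : Finset (Fin (K + 1))} (hg : GoodEvent M K' v)
    (hψ : ∀ a ∈ K', ∃ k, ψ k = a) : pay (M ∘ ψ) v = pay M v := by
  obtain ⟨⟨a, ha, hWa, hβa⟩, hWo⟩ := hg
  obtain ⟨k, rfl⟩ := hψ a ha
  have hWWo (i : Fin m) : WWo (M ∘ ψ) v i = WWo M v i := by
    obtain ⟨b, hb, hWb⟩ := hWo i
    obtain ⟨k', rfl⟩ := hψ b hb
    exact WWo_comp hWb
  simp only [pay, W_comp hWa, minBeta_comp hWa hβa, hWWo]

lemma rev_comp {F : Measure (Fin m → Fin n → ℝ)} {K' : Finset (Fin (K + 1))}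
    (hg : ∀ᵐ v ∂F, GoodEvent M K' v) (hψ : ∀ a ∈ K', ∃ k, ψ k = a) : Rev F (M ∘ ψ) = Rev F M :=
  integral_congr_ae (hg.mono fun _ hv => pay_comp hv hψ)

lemma sharesOptimum_comp_right {K' : Finset (Fin (K + 1))} (hg : GoodEvent M K' v)
    (hψ : ∀ a ∈ K', ψ a = a) : SharesOptimum M (M ∘ ψ) v := by
  obtain ⟨⟨a, ha, hWa, hβa⟩, hWo⟩ := hg
  have hWa' : bw M v (ψ a) = W M v := by rwa [hψ a ha]
  have hβa' : (M (ψ a)).2 = minBeta M v := by rwa [hψ a ha]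
  refine ⟨⟨a, hWa, hβa, ?_, ?_⟩, fun i => ?_⟩
  · rw [W_comp hWa']
    exact hWa'
  · rw [minBeta_comp hWa' hβa']
    exact hβa'
  · obtain ⟨b, hb, hWb⟩ := hWo i
    have hWb' : bwWo M v i (ψ b) = WWo M v i := by rwa [hψ b hb]
    refine ⟨b, hWb, ?_⟩
    rw [WWo_comp hWb']
    exact hWb'

lemma sharesOptimum_comp_comp {M' : Menu m n K} {φ : Fin (K + 1) → Fin (K + 1)}
    {KA KB : Finset (Fin (K + 1))} (hA : GoodEvent M KA v) (hB : GoodEvent M' KB v)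
    (hcover : ∀ a ∈ KA, ∀ b ∈ KB, ∃ k, ψ k = a ∧ φ k = b) :
    SharesOptimum (M ∘ ψ) (M' ∘ φ) v := by
  obtain ⟨⟨a, ha, hWa, hβa⟩, hWoA⟩ := hA
  obtain ⟨⟨b, hb, hWb, hβb⟩, hWoB⟩ := hB
  refine ⟨?_, fun i => ?_⟩
  · obtain ⟨k, rfl, rfl⟩ := hcover a ha b hb
    refine ⟨k, ?_, ?_, ?_, ?_⟩
    · rw [W_comp hWa]; exact hWa
    · rw [minBeta_comp hWa hβa]; exact hβa
    · rw [W_comp hWb]; exact hWb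
    · rw [minBeta_comp hWb hβb]; exact hβb
  · obtain ⟨a', ha', hWa'⟩ := hWoA i
    obtain ⟨b', hb', hWb'⟩ := hWoB i
    obtain ⟨k, rfl, rfl⟩ := hcover a' ha' b' hb'
    refine ⟨k, ?_, ?_⟩
    · rw [WWo_comp hWa']; exact hWa'
    · rw [WWo_comp hWb']; exact hWb'

end Reindexing

lemma exists_fixing_maps_covering_product {α : Type*} [Fintype α] [DecidableEq α]
    {A B : Finset α} {c : α} (hcA : c ∈ A) (hcB : c ∈ B) (hcard : #A * #B ≤ Fintype.card α) :
    ∃ ψ₁ ψ₂ : α → α, (∀ a ∈ A, ψ₁ a = a) ∧ (∀ b ∈ B, ψ₂ b = b) ∧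
      ∀ a ∈ A, ∀ b ∈ B, ∃ k, ψ₁ k = a ∧ ψ₂ k = b := by
  -- Extend `p`, injective on `A ∪ B`, to a bijection from `α` onto some `t ⊇ A × B`.
  let p : α → α × α := fun k => (if k ∈ A then k else c, if k ∈ B then k else c)
  have hmaps : Set.MapsTo p ↑(A ∪ B) ↑(A ×ˢ B) := fun k _ => by
    simp only [p, coe_product, Set.mem_prod, mem_coe]
    constructor <;> split_ifs <;> assumption
  have hinj : Set.InjOn p ↑(A ∪ B) := by
    intro x hx y hy hxy
    simp only [p, Prod.mk.injEq, coe_union, Set.mem_union, mem_coe] at hx hy hxy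
    obtain ⟨h1, h2⟩ := hxy
    split_ifs at h1 h2 <;> grind
  obtain ⟨t, hABt, -, ht⟩ := exists_subsuperset_card_eq (n := Fintype.card α)
    (subset_univ (A ×ˢ B)) (by rwa [card_product])
    (by simpa [Fintype.card_prod] using Nat.le_mul_self _)
  obtain ⟨g, hg⟩ := Set.MapsTo.exists_equiv_extend_of_card_eq ht.symm
    (hmaps.mono_right (by exact_mod_cast hABt)) hinj
  refine ⟨fun k => (g k : α × α).1, fun k => (g k : α × α).2, fun a ha => ?_, fun b hb => ?_,
    fun a ha b hb => ?_⟩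
  · simp [hg a (by simp [ha]), p, ha]
  · simp [hg b (by simp [hb]), p, hb]
  · obtain ⟨k, hk⟩ := g.surjective ⟨(a, b), hABt (mk_mem_product ha hb)⟩
    exact ⟨k, by simp [hk], by simp [hk]⟩

lemma natCast_mul_le_of_le_sqrt {a b c : ℕ} (ha : (a : ℝ) ≤ √c) (hb : (b : ℝ) ≤ √c) :
    a * b ≤ c := by
  have h := mul_le_mul ha hb (Nat.cast_nonneg _) (Real.sqrt_nonneg _)
  rw [Real.mul_self_sqrt (Nat.cast_nonneg _)] at h
  exact_mod_cast h

theorem statement11_general {m n K : ℕ} (F : Measure (Fin m → Fin n → ℝ))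
    [IsProbabilityMeasure F] (hFV : F (VP m n) = 1)
    (M₁ M₂ : Menu m n K) (hM₁ : IsMenu M₁) (hM₂ : IsMenu M₂)
    (hr₁ : Reducible F M₁ 0) (hr₂ : Reducible F M₂ 0) :
    PLConnected F M₁ M₂ 0 3 := by
  obtain ⟨K₁, h0₁, hc₁, hg₁⟩ := hr₁.exists_ae_goodEvent
  obtain ⟨K₂, h0₂, hc₂, hg₂⟩ := hr₂.exists_ae_goodEvent
  have hcard : #K₁ * #K₂ ≤ K + 1 :=
    natCast_mul_le_of_le_sqrt (by simpa using hc₁) (by simpa using hc₂)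
  obtain ⟨ψ₁, ψ₂, hfix₁, hfix₂, hcover⟩ :=
    exists_fixing_maps_covering_product h0₁ h0₂ (by simpa using hcard)
  let P : Fin 4 → Menu m n K := ![M₁, M₁ ∘ ψ₁, M₂ ∘ ψ₂, M₂]
  have hP (i : Fin 4) : IsMenu (P i) := by
    fin_cases i
    exacts [hM₁, hM₁.comp (hfix₁ 0 h0₁), hM₂.comp (hfix₂ 0 h0₂), hM₂]
  have hRev (i : Fin 4) : min (Rev F M₁) (Rev F M₂) ≤ Rev F (P i) := by
    fin_cases i <;>
      simp [P, rev_comp hg₁ fun a ha => ⟨a, hfix₁ a ha⟩, rev_comp hg₂ fun a ha => ⟨a, hfix₂ a ha⟩]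
  have hShare (i : Fin 3) : ∀ᵐ v ∂F, SharesOptimum (P i.castSucc) (P i.succ) v := by
    fin_cases i
    · exact hg₁.mono fun v hv => sharesOptimum_comp_right hv hfix₁
    · show ∀ᵐ v ∂F, SharesOptimum (M₁ ∘ ψ₁) (M₂ ∘ ψ₂) v
      exact (hg₁.and hg₂).mono fun v hv => sharesOptimum_comp_comp hv.1 hv.2 hcover
    · exact hg₂.mono fun v hv => (sharesOptimum_comp_right hv hfix₂).symm
  have hVP := ae_mem_of_measure_eq_one measurableSet_VP hFV
  refine ⟨P, rfl, rfl, hP, fun i lam ⟨h0, h1⟩ => ?_⟩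
  rw [rev_comb_of_ae_sharesOptimum (integrable_pay hVP (hP _)) (integrable_pay hVP (hP _))
    (hShare i) h0 h1]
  nlinarith [hRev i.castSucc, hRev i.succ]

/-- If two AMA menus `M₁`, `M₂` (indexed by `{0,…,K}`) are
`0`-reducible, then they are `0`-mode-connected via a piecewise linear path with three
linear pieces. -/
theorem statement11 {m n K : ℕ} (hm : 0 < m) (F : Measure (Fin m → Fin n → ℝ))
    [IsProbabilityMeasure F] (hFV : F (VP m n) = 1)
    (M₁ M₂ : Menu m n K) (hM₁ : IsMenu M₁) (hM₂ : IsMenu M₂)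
    (hr₁ : Reducible F M₁ 0) (hr₂ : Reducible F M₂ 0) :
    PLConnected F M₁ M₂ 0 3 :=
  statement11_general F hFV M₁ M₂ hM₁ hM₂ hr₁ hr₂

end AMA
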